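/- Let Ψ be a Poisson point process on ℝ² of fixed intensity β/(2πζ), (h_i) i.i.d. unit-mean nonnegative marks, L a physically feasible path loss with total integral γ = ∫₀^∞ r L(r) dr, and h̃ a nonnegative random variable with mean 1 independent of everything else. Then the random variable S = L₀·h̃ / (Σ_{x_i∈Ψ} L(|x_i|)h_i + 2πγ/(αζ)) is almost surely finite and strictly positive whenever h̃ > 0, and its expectation satisfies L₀αζ/(γ(2π + αβ)) ≤ 𝔼[S] ≤ L₀αζ/(2πγ). -/

import Mathlib

/-
Campbell's theorem: since every count `N(A)` is Poisson with mean `Λ A`, the mean measure of the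
process is its intensity `Λ`, so `𝔼[I] = ∫ L(‖x‖) h dΛ = (β/(2πζ)) · 2πγ · 𝔼[h] = βγ/ζ` by polar
coordinates. A finite mean makes `I` a.s. finite. Writing `c = 2πγ/(αζ)`, independence gives
`𝔼[S] = 𝔼[L₀/(I + c)] · 𝔼[h̃] = 𝔼[L₀/(I + c)]`; the convex function `x ↦ L₀/(x + c)` lies above
its tangent at `𝔼[I]` (Jensen), which gives `L₀/(βγ/ζ + c)`, and below `L₀/c` on `x ≥ 0`.
-/

open MeasureTheory ProbabilityTheory Real Set Filter ENNReal

noncomputable section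

/-- The Euclidean plane `ℝ²`. -/
abbrev Plane := EuclideanSpace ℝ (Fin 2)

/-- A Poisson point process (Poisson random measure) on a measurable space `E`
with intensity measure `Λ`, defined on a probability space `(Ω, P)`:
counts of disjoint sets are independent, and the count of any set `A` of finite
intensity is Poisson distributed with mean `Λ A`. -/
structure PoissonPP {Ω E : Type*} [MeasurableSpace Ω] [MeasurableSpace E]
    (P : Measure Ω) (Λ : Measure E) where
  N : Ω → Measure E
  measurable_count : ∀ A : Set E, MeasurableSet A → Measurable fun ω => N ω A
  poisson_count : ∀ A : Set E, MeasurableSet A → Λ A ≠ ⊤ → ∀ k : ℕ,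
    P {ω | N ω A = k} =
      ENNReal.ofReal (Real.exp (-(Λ A).toReal) * (Λ A).toReal ^ k / (Nat.factorial k))
  indep_count : ∀ A B : Set E, MeasurableSet A → MeasurableSet B → Disjoint A B →
    IndepFun (fun ω => N ω A) (fun ω => N ω B) P

/-- The marked shot noise `I(ω) = Σ_{(x_i,h_i) ∈ N(ω)} L(‖x_i‖)·h_i` of a marked
point process on `ℝ² × ℝ` (points with real marks). -/
def shotNoise {Ω : Type*} [MeasurableSpace Ω] {P : Measure Ω} {Λ : Measure (Plane × ℝ)}
    (pp : PoissonPP P Λ) (L : ℝ → ℝ) (ω : Ω) : ℝ≥0∞ :=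
  ∫⁻ p, ENNReal.ofReal (L ‖p.1‖ * p.2) ∂(pp.N ω)

open scoped NNReal Nat

lemma hasSum_natCast_mul_poisson (r : ℝ≥0) :
    HasSum (fun n : ℕ => n * (exp (-r) * r ^ n / (n !))) (r : ℝ) := by
  set p : ℕ → ℝ := fun n => exp (-r) * r ^ n / (n !)
  have shift : (fun n : ℕ => ((n + 1 : ℕ) : ℝ) * p (n + 1)) = fun n => r * p n := by
    funext n; simp only [p, Nat.factorial_succ]; push_cast; field_simp; ring
  have h := (hasSum_nat_add_iff (f := fun n : ℕ => n * p n) 1).mp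
    (shift ▸ (hasSum_one_poissonMeasure r).mul_left (r : ℝ))
  simpa using h

lemma lintegral_eq_of_poisson_law {Ω : Type*} [MeasurableSpace Ω] {P : Measure Ω}
    [IsProbabilityMeasure P] {X : Ω → ℝ≥0∞} (hX : Measurable X) (r : ℝ≥0)
    (hlaw : ∀ k : ℕ, P {ω | X ω = k} = ENNReal.ofReal (exp (-r) * r ^ k / (k !))) :
    ∫⁻ ω, X ω ∂P = r := by
  set T : ℕ → Set Ω := fun k => {ω | X ω = k}
  have hT : ∀ k, MeasurableSet (T k) := fun k => hX (measurableSet_singleton _)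
  have hdisj : Pairwise (Function.onFun Disjoint T) := fun i j hij =>
    Set.disjoint_left.mpr fun ω hi hj => hij (Nat.cast_injective ((hi : X ω = i).symm.trans hj))
  have hsum := hasSum_one_poissonMeasure r
  -- The Poisson masses sum to `1`, so `X` is a.s. a natural number.
  have hfull : (⋃ k, T k) =ᵐ[P] (univ : Set Ω) := by
    refine ae_eq_univ.mpr ((prob_compl_eq_zero_iff (MeasurableSet.iUnion hT)).mpr ?_)
    rw [measure_iUnion hdisj hT, tsum_congr hlaw,
      ← ENNReal.ofReal_tsum_of_nonneg (fun k => by positivity) hsum.summable, hsum.tsum_eq,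
      ENNReal.ofReal_one]
  calc ∫⁻ ω, X ω ∂P = ∫⁻ ω in ⋃ k, T k, X ω ∂P := by
        rw [Measure.restrict_congr_set hfull, Measure.restrict_univ]
    _ = ∑' k, ∫⁻ ω in T k, X ω ∂P := lintegral_iUnion hT hdisj X
    _ = ∑' k : ℕ, ENNReal.ofReal (k * (exp (-r) * r ^ k / (k !))) := by
        refine tsum_congr fun k => ?_
        rw [setLIntegral_congr_fun (hT k) (fun ω (hω : X ω = k) => hω), setLIntegral_const,
          hlaw k, ← ENNReal.ofReal_natCast k, ← ENNReal.ofReal_mul (Nat.cast_nonneg k)]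
    _ = r := by
        rw [← ENNReal.ofReal_tsum_of_nonneg (fun k => by positivity)
          (hasSum_natCast_mul_poisson r).summable, (hasSum_natCast_mul_poisson r).tsum_eq,
          ENNReal.ofReal_coe_nnreal]

namespace PoissonPP

variable {Ω E : Type*} [MeasurableSpace Ω] [MeasurableSpace E] {P : Measure Ω}
  {Λ : Measure E} (pp : PoissonPP P Λ)

lemma measurable_N : Measurable pp.N :=
  Measure.measurable_of_measurable_coe _ pp.measurable_count

lemma lintegral_count [IsProbabilityMeasure P] {A : Set E} (hA : MeasurableSet A)
    (hfin : Λ A ≠ ⊤) :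
    ∫⁻ ω, pp.N ω A ∂P = Λ A := by
  rw [lintegral_eq_of_poisson_law (pp.measurable_count A hA) (Λ A).toNNReal
    (pp.poisson_count A hA hfin), ENNReal.coe_toNNReal hfin]

lemma bind_eq [IsProbabilityMeasure P] [SigmaFinite Λ] : P.bind pp.N = Λ := by
  refine Measure.ext fun A hA => ?_
  rw [Measure.bind_apply hA pp.measurable_N.aemeasurable]
  set B : ℕ → Set E := fun n => A ∩ spanningSets Λ n
  have hB : ∀ n, MeasurableSet (B n) := fun n => hA.inter (measurableSet_spanningSets Λ n)
  have hBmono : Monotone B := fun _ _ hij =>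
    inter_subset_inter_right _ (monotone_spanningSets Λ hij)
  have hBU : (⋃ n, B n) = A := by rw [← inter_iUnion, iUnion_spanningSets, inter_univ]
  calc ∫⁻ ω, pp.N ω A ∂P = ∫⁻ ω, ⨆ n, pp.N ω (B n) ∂P := by
        simp_rw [← hBmono.measure_iUnion, hBU]
    _ = ⨆ n, ∫⁻ ω, pp.N ω (B n) ∂P :=
        lintegral_iSup (fun n => pp.measurable_count _ (hB n))
          fun i j hij ω => measure_mono (hBmono hij)
    _ = ⨆ n, Λ (B n) := iSup_congr fun n => pp.lintegral_count (hB n) <|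
          ne_top_of_le_ne_top (measure_spanningSets_lt_top Λ n).ne (measure_mono inter_subset_right)
    _ = Λ A := by rw [← hBmono.measure_iUnion, hBU]

/-- Campbell's theorem. -/
lemma lintegral_lintegral [IsProbabilityMeasure P] [SigmaFinite Λ] {f : E → ℝ≥0∞}
    (hf : Measurable f) :
    ∫⁻ ω, ∫⁻ x, f x ∂(pp.N ω) ∂P = ∫⁻ x, f x ∂Λ := by
  rw [← Measure.lintegral_bind pp.measurable_N.aemeasurable hf.aemeasurable, pp.bind_eq]

end PoissonPP

lemma integrable_comp_norm_plane {f : ℝ → ℝ} (hf : IntegrableOn (fun r => r * f r) (Ioi 0)) :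
    Integrable (fun x : Plane => f ‖x‖) := by
  rw [integrable_fun_norm_addHaar]
  simpa using hf

lemma integral_comp_norm_plane (f : ℝ → ℝ) :
    ∫ x : Plane, f ‖x‖ = 2 * π * ∫ r in Ioi 0, r * f r := by
  rw [integral_fun_norm_addHaar]
  simp [Measure.real, mul_assoc, pi_nonneg]

lemma lintegral_ofReal_comp_norm_plane {f : ℝ → ℝ} (hf0 : ∀ r, 0 ≤ f r)
    (hf : IntegrableOn (fun r => r * f r) (Ioi 0)) :
    ∫⁻ x : Plane, ENNReal.ofReal (f ‖x‖) = ENNReal.ofReal (2 * π * ∫ r in Ioi 0, r * f r) := by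
  rw [← integral_comp_norm_plane, ofReal_integral_eq_lintegral_ofReal
    (integrable_comp_norm_plane hf) (ae_of_all _ fun x => hf0 _)]

lemma lintegral_ofReal_eq_one {ν : Measure ℝ} (hν0 : ν (Iio 0) = 0) (hν1 : ∫ y, y ∂ν = 1) :
    ∫⁻ y, ENNReal.ofReal y ∂ν = 1 := by
  have hint : Integrable (fun y : ℝ => y) ν := by
    by_contra h
    rw [integral_undef h] at hν1
    exact zero_ne_one hν1
  have hnonneg : 0 ≤ᵐ[ν] fun y => y := by
    filter_upwards [measure_eq_zero_iff_ae_notMem.mp hν0] with y hy using not_lt.mp hy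
  rw [← ofReal_integral_eq_lintegral_ofReal hint hnonneg, hν1, ENNReal.ofReal_one]

lemma lintegral_ofReal_mul_prod {α : Type*} [MeasurableSpace α] {μ : Measure α} {ν : Measure ℝ}
    [SFinite ν] {g : α → ℝ} (hg : Measurable g) (hg0 : ∀ x, 0 ≤ g x) :
    ∫⁻ p, ENNReal.ofReal (g p.1 * p.2) ∂(μ.prod ν) =
      (∫⁻ x, ENNReal.ofReal (g x) ∂μ) * ∫⁻ y, ENNReal.ofReal y ∂ν := by
  simp_rw [ENNReal.ofReal_mul (hg0 _)]
  exact lintegral_prod_mul hg.ennreal_ofReal.aemeasurable measurable_id.ennreal_ofReal.aemeasurable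

instance (c : ℝ) : SigmaFinite (ENNReal.ofReal c • (volume : Measure Plane)) := by
  rw [ENNReal.ofReal, ← ENNReal.smul_def]; infer_instance

lemma measurable_shotNoise {Ω : Type*} [MeasurableSpace Ω] {P : Measure Ω}
    {Λ : Measure (Plane × ℝ)} (pp : PoissonPP P Λ) {L : ℝ → ℝ} (hL : Measurable L) :
    Measurable (shotNoise pp L) :=
  (Measure.measurable_lintegral (by fun_prop)).comp pp.measurable_N

lemma lintegral_shotNoise {Ω : Type*} [MeasurableSpace Ω] {P : Measure Ω}
    [IsProbabilityMeasure P] {c : ℝ} {ν : Measure ℝ} [SigmaFinite ν]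
    (pp : PoissonPP P ((ENNReal.ofReal c • (volume : Measure Plane)).prod ν)) {L : ℝ → ℝ}
    (hL : Measurable L) (hL0 : ∀ r, 0 ≤ L r) (hint : IntegrableOn (fun r => r * L r) (Ioi 0)) :
    ∫⁻ ω, shotNoise pp L ω ∂P =
      ENNReal.ofReal c * ENNReal.ofReal (2 * π * ∫ r in Ioi 0, r * L r) *
        ∫⁻ y, ENNReal.ofReal y ∂ν := by
  simp only [shotNoise]
  rw [pp.lintegral_lintegral (by fun_prop),
    lintegral_ofReal_mul_prod (g := fun x : Plane => L ‖x‖) (by fun_prop) (fun x => hL0 _),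
    lintegral_smul_measure, lintegral_ofReal_comp_norm_plane hL0 hint, smul_eq_mul]

lemma div_sub_div_sq_mul_sub_le_div_add {a c m x : ℝ} (ha : 0 ≤ a) (hx : 0 < x + c)
    (hm : 0 < m + c) :
    a / (m + c) - a / (m + c) ^ 2 * (x - m) ≤ a / (x + c) := by
  have key : a / (x + c) - (a / (m + c) - a / (m + c) ^ 2 * (x - m)) =
      a * (x - m) ^ 2 / ((x + c) * (m + c) ^ 2) := by
    field_simp; ring
  have : 0 ≤ a * (x - m) ^ 2 / ((x + c) * (m + c) ^ 2) := by positivity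
  linarith

section

variable {Ω : Type*} [MeasurableSpace Ω] {P : Measure Ω} {X : Ω → ℝ} {a c : ℝ}

lemma integrable_div_add [IsFiniteMeasure P] (hc : 0 < c) (hX0 : ∀ ω, 0 ≤ X ω)
    (hX : AEMeasurable X P) : Integrable (fun ω => a / (X ω + c)) P := by
  refine (integrable_const (|a| / c)).mono'
    ((hX.add_const c).const_div a).aestronglyMeasurable (ae_of_all _ fun ω => ?_)
  rw [norm_div, Real.norm_eq_abs, Real.norm_of_nonneg (by linarith [hX0 ω])]
  exact div_le_div_of_nonneg_left (abs_nonneg a) hc (le_add_of_nonneg_left (hX0 ω))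

lemma ProbabilityTheory.IndepFun.integral_mul_div_add {H : Ω → ℝ} (hind : IndepFun H X P)
    (hH : Measurable H) (hX : Measurable X) :
    ∫ ω, a * H ω / (X ω + c) ∂P = (∫ ω, a / (X ω + c) ∂P) * ∫ ω, H ω ∂P := by
  have hind' : IndepFun (fun ω => a / (X ω + c)) H P :=
    (hind.comp measurable_id (by fun_prop : Measurable fun x : ℝ => a / (x + c))).symm
  rw [← hind'.integral_mul_eq_mul_integral ((hX.add_const c).const_div a).aestronglyMeasurable
    hH.aestronglyMeasurable]
  exact integral_congr_ae (ae_of_all _ fun ω => by simp only [Pi.mul_apply]; ring)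

variable [IsProbabilityMeasure P]

lemma integral_div_add_le (ha : 0 ≤ a) (hc : 0 < c) (hX0 : ∀ ω, 0 ≤ X ω)
    (hX : AEMeasurable X P) : ∫ ω, a / (X ω + c) ∂P ≤ a / c := by
  calc ∫ ω, a / (X ω + c) ∂P ≤ ∫ _, a / c ∂P :=
        integral_mono (integrable_div_add hc hX0 hX) (integrable_const _) fun ω =>
          div_le_div_of_nonneg_left ha hc (le_add_of_nonneg_left (hX0 ω))
    _ = a / c := by simp

/-- Jensen's inequality for the convex function `x ↦ a / (x + c)`, via its tangent at the mean. -/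
lemma div_integral_add_le_integral_div_add (ha : 0 ≤ a) (hc : 0 < c) (hX0 : ∀ ω, 0 ≤ X ω)
    (hX : Integrable X P) : a / (∫ ω, X ω ∂P + c) ≤ ∫ ω, a / (X ω + c) ∂P := by
  set m := ∫ ω, X ω ∂P
  have hm : 0 < m + c := by
    have : 0 ≤ m := integral_nonneg hX0
    linarith
  have hdev : Integrable (fun ω => a / (m + c) ^ 2 * (X ω - m)) P :=
    (hX.sub (integrable_const m)).const_mul _
  calc a / (m + c) = ∫ ω, a / (m + c) - a / (m + c) ^ 2 * (X ω - m) ∂P := by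
        rw [integral_sub (integrable_const _) hdev, integral_const_mul,
          integral_sub hX (integrable_const m)]
        simp [m]
    _ ≤ ∫ ω, a / (X ω + c) ∂P :=
        integral_mono ((integrable_const _).sub hdev) (integrable_div_add hc hX0 hX.aemeasurable)
          fun ω => div_sub_div_sq_mul_sub_le_div_add ha (by linarith [hX0 ω]) hm

end

theorem stmt3_general {Ω : Type*} [MeasurableSpace Ω] (P : Measure Ω) [IsProbabilityMeasure P]
    (α β ζ L₀ γ : ℝ) (hα : 0 < α) (hβ : 0 < β) (hζ : 0 < ζ) (hL0 : 0 < L₀) (hγpos : 0 < γ)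
    (ν : Measure ℝ) [IsProbabilityMeasure ν]
    (hν0 : ν (Set.Iio 0) = 0) (hνmean : ∫ x, x ∂ν = 1)
    (L : ℝ → ℝ) (hLmeas : Measurable L) (hLnonneg : ∀ r, 0 ≤ L r)
    (hγ : γ = ∫ r in Set.Ioi (0:ℝ), r * L r)
    (hint : IntegrableOn (fun r => r * L r) (Set.Ioi 0))
    (pp : PoissonPP P ((ENNReal.ofReal (β / (2 * π * ζ)) • (volume : Measure Plane)).prod ν))
    (htilde : Ω → ℝ) (hthmeas : Measurable htilde)
    (hthmean : ∫ ω, htilde ω ∂P = 1)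
    (hindep : IndepFun htilde (fun ω => (shotNoise pp L ω).toReal) P)
    (S : Ω → ℝ)
    (hS : ∀ ω, S ω = L₀ * htilde ω / ((shotNoise pp L ω).toReal + 2 * π * γ / (α * ζ))) :
    (∀ᵐ ω ∂P, shotNoise pp L ω < ⊤) ∧
    (∀ᵐ ω ∂P, 0 < htilde ω → 0 < S ω) ∧
    (L₀ * α * ζ / (γ * (2 * π + α * β)) ≤ ∫ ω, S ω ∂P) ∧
    (∫ ω, S ω ∂P ≤ L₀ * α * ζ / (2 * π * γ)) := by
  have hc : 0 < 2 * π * γ / (α * ζ) := by positivity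
  have hI_meas := measurable_shotNoise pp hLmeas
  have hI_lintegral : ∫⁻ ω, shotNoise pp L ω ∂P = ENNReal.ofReal (β * γ / ζ) := by
    rw [lintegral_shotNoise pp hLmeas hLnonneg hint, lintegral_ofReal_eq_one hν0 hνmean, mul_one,
      ← hγ, ← ENNReal.ofReal_mul (by positivity)]
    congr 1
    field_simp
  have hI_fin : ∫⁻ ω, shotNoise pp L ω ∂P ≠ ⊤ := hI_lintegral ▸ ofReal_ne_top
  have hI_ae : ∀ᵐ ω ∂P, shotNoise pp L ω < ⊤ := ae_lt_top hI_meas hI_fin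
  have hI_int := integrable_toReal_of_lintegral_ne_top hI_meas.aemeasurable hI_fin
  have hI_integral : ∫ ω, (shotNoise pp L ω).toReal ∂P = β * γ / ζ := by
    rw [integral_toReal hI_meas.aemeasurable hI_ae, hI_lintegral, toReal_ofReal (by positivity)]
  have hES : ∫ ω, S ω ∂P =
      ∫ ω, L₀ / ((shotNoise pp L ω).toReal + 2 * π * γ / (α * ζ)) ∂P := by
    simp_rw [hS]
    rw [hindep.integral_mul_div_add hthmeas hI_meas.ennreal_toReal, hthmean, mul_one]
  refine ⟨hI_ae, ae_of_all _ fun ω hω => ?_, ?_, ?_⟩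
  · rw [hS]
    positivity
  · calc L₀ * α * ζ / (γ * (2 * π + α * β))
        = L₀ / (∫ ω, (shotNoise pp L ω).toReal ∂P + 2 * π * γ / (α * ζ)) := by
          rw [hI_integral]
          field_simp
          ring
      _ ≤ ∫ ω, S ω ∂P := hES ▸ div_integral_add_le_integral_div_add hL0.le hc
          (fun _ => toReal_nonneg) hI_int
  · calc ∫ ω, S ω ∂P ≤ L₀ / (2 * π * γ / (α * ζ)) := hES ▸ integral_div_add_le hL0.le hc
          (fun _ => toReal_nonneg) hI_meas.ennreal_toReal.aemeasurable
      _ = L₀ * α * ζ / (2 * π * γ) := by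
          field_simp

/-- the limiting SINR S = L₀h̃/(Σ_{x_i∈Ψ}L(|x_i|)h_i + 2πγ/(αζ)), where
Ψ is a PPP of intensity β/(2πζ) with i.i.d. nonnegative unit-mean marks, L is a
physically feasible path loss with L(0) = L₀ and γ = ∫₀^∞ rL(r)dr, and h̃ is an
independent nonnegative unit-mean variable, is a.s. finite, strictly positive
whenever h̃ > 0, and L₀αζ/(γ(2π + αβ)) ≤ 𝔼[S] ≤ L₀αζ/(2πγ). -/
theorem stmt3 {Ω : Type*} [MeasurableSpace Ω] (P : Measure Ω) [IsProbabilityMeasure P]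
    (α β ζ L₀ γ : ℝ) (hα : 0 < α) (hβ : 0 < β) (hζ : 0 < ζ) (hL0 : 0 < L₀) (hγpos : 0 < γ)
    (ν : Measure ℝ) [IsProbabilityMeasure ν]
    (hν0 : ν (Set.Iio 0) = 0) (hνmean : ∫ x, x ∂ν = 1)
    (L : ℝ → ℝ) (hLmeas : Measurable L) (hLnonneg : ∀ r, 0 ≤ L r)
    (hLmono : AntitoneOn L (Set.Ici 0)) (hL0val : L 0 = L₀)
    (hγ : γ = ∫ r in Set.Ioi (0:ℝ), r * L r)
    (hint : IntegrableOn (fun r => r * L r) (Set.Ioi 0))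
    (pp : PoissonPP P ((ENNReal.ofReal (β / (2 * π * ζ)) • (volume : Measure Plane)).prod ν))
    (htilde : Ω → ℝ) (hthmeas : Measurable htilde) (hthn : ∀ ω, 0 ≤ htilde ω)
    (hthmean : ∫ ω, htilde ω ∂P = 1)
    (hindep : IndepFun htilde (fun ω => (shotNoise pp L ω).toReal) P)
    (S : Ω → ℝ)
    (hS : ∀ ω, S ω = L₀ * htilde ω / ((shotNoise pp L ω).toReal + 2 * π * γ / (α * ζ))) :
    (∀ᵐ ω ∂P, shotNoise pp L ω < ⊤) ∧
    (∀ᵐ ω ∂P, 0 < htilde ω → 0 < S ω) ∧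
    (L₀ * α * ζ / (γ * (2 * π + α * β)) ≤ ∫ ω, S ω ∂P) ∧
    (∫ ω, S ω ∂P ≤ L₀ * α * ζ / (2 * π * γ)) :=
  stmt3_general P α β ζ L₀ γ hα hβ hζ hL0 hγpos ν hν0 hνmean L hLmeas hLnonneg hγ hint pp htilde
    hthmeas hthmean hindep S hS
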